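/- arXiv:1712.01941 — 2 statements merged into one kernel-verified Lean document; each statement's English description precedes it below -/
import Mathlib

section
/- For every natural number n, b_n² + b_{n+1}² = (l² + 4) · a_{2n+1}. -/
/-- The sequence `a` defined by `a 0 = 0`, `a 1 = 1`, `a (n+2) = l * a (n+1) + a n`. -/
def a (l : ℕ) : ℕ → ℤ
  | 0 => 0
  | 1 => 1
  | n + 2 => l * a l (n + 1) + a l n

/-- The sequence `b` defined by `b 0 = 2`, `b 1 = l`, `b (n+2) = l * b (n+1) + b n`. -/
def b (l : ℕ) : ℕ → ℤ
  | 0 => 2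
  | 1 => (l : ℤ)
  | n + 2 => l * b l (n + 1) + b l n

lemma a_rec (l m : ℕ) : a l (m + 2) = l * a l (m + 1) + a l m := rfl

lemma b_rec (l m : ℕ) : b l (m + 2) = l * b l (m + 1) + b l m := rfl

lemma bkey (l : ℕ) (n : ℕ) :
    b l n ^ 2 - ((l:ℤ)^2+4) * a l n ^ 2 = 4 * (-1)^n ∧
    b l (n+1) ^ 2 - ((l:ℤ)^2+4) * a l (n+1) ^ 2 = -(4 * (-1)^n) ∧
    b l (n+1) * b l n - ((l:ℤ)^2+4) * (a l (n+1) * a l n) = 2*l*(-1)^n := by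
  induction n with
  | zero => refine ⟨?_, ?_, ?_⟩ <;> simp [a, b] <;> ring
  | succ n ih =>
    obtain ⟨h1, h2, h3⟩ := ih
    refine ⟨?_, ?_, ?_⟩
    · linear_combination h2
    · rw [a_rec, b_rec]
      linear_combination (l:ℤ)^2 * h2 + 2*l*h3 + h1
    · rw [a_rec, b_rec]
      linear_combination (l:ℤ) * h2 + h3

lemma akey (l n : ℕ) :
    a l (2*n+1) = a l n ^ 2 + a l (n+1) ^ 2 ∧
    a l (2*n+2) = a l (n+1) * (a l n + a l (n+2)) := by
  induction n with
  | zero => constructor <;> simp [a]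
  | succ n ih =>
    obtain ⟨h1, h2⟩ := ih
    have e1 : 2*(n+1)+1 = (2*n+1)+2 := by ring
    have e2 : 2*(n+1)+2 = (2*n+2)+2 := by ring
    constructor
    · rw [e1, a_rec, a_rec l n]
      linear_combination (l:ℤ) * h2 + h1 + (l:ℤ) * a l (n+1) * a_rec l n
    · rw [e2, a_rec, a_rec l (n+1), a_rec l n]
      have h2' : 2*n+2+1 = 2*(n+1)+1 := by ring
      have h3 : a l (2*n+2+1) = a l (n+1) ^ 2 + a l (n+2) ^ 2 := by
        rw [h2', e1, a_rec, a_rec l n]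
        linear_combination (l:ℤ) * h2 + h1 + (l:ℤ) * a l (n+1) * a_rec l n
      rw [a_rec l n] at h2 h3
      linear_combination (l:ℤ) * h3 + h2

theorem b_sq_add_b_sq (l : ℕ) (hl : 0 < l) (n : ℕ) :
    b l n ^ 2 + b l (n + 1) ^ 2 = ((l : ℤ) ^ 2 + 4) * a l (2 * n + 1) := by
  obtain ⟨h1, h2, -⟩ := bkey l n
  obtain ⟨h, -⟩ := akey l n
  linear_combination h1 + h2 - ((l:ℤ)^2+4) * h
end

section
/- For every natural number n ≥ 1, the generalized quaternion algebra H_ℚ(−1, (l²+4)·a_{2n+1}) splits, i.e. it is isomorphic as a ℚ-algebra to the algebra of 2×2 matrices over ℚ. -/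
/-!
Two ingredients. First, the addition formula `a (m + n + 1) = a (m + 1) a (n + 1) + a m a n`
together with `b n = 2 a (n + 1) - l a n` gives `(l² + 4) a (2n + 1) = b n ² + b (n + 1) ²`.
Second, over a field of characteristic `≠ 2`, if `β = x² + y² ≠ 0` then the matrices
`i = !![0, -1; 1, 0]` and `j = !![x, y; y, -x]` satisfy `i² = -1`, `j² = β`, `ij = -ji`; the
induced algebra map `ℍ[K, -1, β] → M₂(K)` is surjective, hence bijective since both sides have
dimension `4`.
-/

section Sequences

variable (l : ℕ)

theorem a_add_two (n : ℕ) : a l (n + 2) = l * a l (n + 1) + a l n := rfl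

theorem b_add_two (n : ℕ) : b l (n + 2) = l * b l (n + 1) + b l n := rfl

theorem a_add_add_one (m n : ℕ) :
    a l (m + n + 1) = a l (m + 1) * a l (n + 1) + a l m * a l n := by
  induction n using Nat.twoStepInduction with
  | zero => simp [a]
  | one => simp only [a, mul_one, add_zero]; ring
  | more n ih₁ ih₂ =>
    rw [show m + (n + 2) + 1 = m + n + 1 + 2 by omega, a_add_two,
      show m + n + 1 + 1 = m + (n + 1) + 1 by omega, ih₁, ih₂, a_add_two l (n + 1), a_add_two]
    ring

theorem b_eq_two_mul_a_sub (n : ℕ) : b l n = 2 * a l (n + 1) - l * a l n := by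
  induction n using Nat.twoStepInduction with
  | zero => simp [a, b]
  | one => simp only [a, b, mul_one, add_zero]; ring
  | more n ih₁ ih₂ =>
    rw [b_add_two, ih₁, ih₂, a_add_two l (n + 1), a_add_two]
    ring

theorem sq_add_four_mul_a_two_mul_add_one (n : ℕ) :
    ((l : ℤ) ^ 2 + 4) * a l (2 * n + 1) = b l n ^ 2 + b l (n + 1) ^ 2 := by
  rw [two_mul, a_add_add_one, b_eq_two_mul_a_sub, b_eq_two_mul_a_sub, a_add_two]
  ring

theorem a_nonneg (n : ℕ) : 0 ≤ a l n := by
  induction n using Nat.twoStepInduction with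
  | zero => simp [a]
  | one => simp [a]
  | more n ih₁ ih₂ => rw [a_add_two]; positivity

theorem a_two_mul_add_one_pos (n : ℕ) : 0 < a l (2 * n + 1) := by
  induction n with
  | zero => simp [a]
  | succ n ih =>
    rw [show 2 * (n + 1) + 1 = 2 * n + 1 + 2 by omega, a_add_two]
    have := a_nonneg l (2 * n + 2)
    positivity

end Sequences

section MatrixSplitting

variable {K : Type*} [Field K]

open Matrix Quaternion

def matrixQuaternionBasis (x y : K) :
    QuaternionAlgebra.Basis (Matrix (Fin 2) (Fin 2) K) (-1) 0 (x ^ 2 + y ^ 2) where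
  i := !![0, -1; 1, 0]
  j := !![x, y; y, -x]
  k := !![-y, x; x, y]
  i_mul_i := by
    ext i j; fin_cases i <;> fin_cases j <;> simp [one_fin_two]
  j_mul_j := by
    ext i j; fin_cases i <;> fin_cases j <;> simp [one_fin_two] <;> ring
  i_mul_j := by simp
  j_mul_i := by simp

theorem matrixQuaternionBasis_lift (x y : K) (q : ℍ[K, -1, 0, x ^ 2 + y ^ 2]) :
    (matrixQuaternionBasis x y).lift q =
      !![q.re + x * q.imJ - y * q.imK, -q.imI + y * q.imJ + x * q.imK;
        q.imI + y * q.imJ + x * q.imK, q.re - x * q.imJ + y * q.imK] := by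
  ext i j
  fin_cases i <;> fin_cases j <;>
    simp [QuaternionAlgebra.Basis.lift, matrixQuaternionBasis, Algebra.algebraMap_eq_smul_one] <;>
    ring

theorem nonempty_algEquiv_matrix_of_sq_add_sq [NeZero (2 : K)] (x y : K) (h : x ^ 2 + y ^ 2 ≠ 0) :
    Nonempty (ℍ[K, -1, x ^ 2 + y ^ 2] ≃ₐ[K] Matrix (Fin 2) (Fin 2) K) := by
  set φ := (matrixQuaternionBasis x y).liftHom
  have hsurj : Function.Surjective φ := by
    intro M
    refine ⟨⟨(M 0 0 + M 1 1) / 2, (M 1 0 - M 0 1) / 2,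
      (x * (M 0 0 - M 1 1) + y * (M 1 0 + M 0 1)) / (2 * (x ^ 2 + y ^ 2)),
      (x * (M 1 0 + M 0 1) - y * (M 0 0 - M 1 1)) / (2 * (x ^ 2 + y ^ 2))⟩, ?_⟩
    rw [QuaternionAlgebra.Basis.liftHom_apply, matrixQuaternionBasis_lift]
    ext i j
    fin_cases i <;> fin_cases j <;>
      simp only [Fin.zero_eta, Fin.mk_one, of_apply, cons_val', cons_val_zero, cons_val_one,
        cons_val_fin_one] <;>
      field_simp <;> ring
  have hinj : Function.Injective φ :=
    (LinearMap.injective_iff_surjective_of_finrank_eq_finrank (f := φ.toLinearMap)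
      (by simp [QuaternionAlgebra.finrank_eq_four, Module.finrank_matrix])).2 hsurj
  exact ⟨AlgEquiv.ofBijective φ ⟨hinj, hsurj⟩⟩

end MatrixSplitting

open Quaternion in
theorem quat_alg_splits_la_general (l : ℕ) (n : ℕ) :
    Nonempty (ℍ[ℚ, -1, ((((l : ℤ) ^ 2 + 4) * a l (2 * n + 1) : ℤ) : ℚ)] ≃ₐ[ℚ]
      Matrix (Fin 2) (Fin 2) ℚ) := by
  have hβ : ((((l : ℤ) ^ 2 + 4) * a l (2 * n + 1) : ℤ) : ℚ) =
      (b l n : ℚ) ^ 2 + (b l (n + 1) : ℚ) ^ 2 := by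
    exact_mod_cast sq_add_four_mul_a_two_mul_add_one l n
  have hβ_ne : ((((l : ℤ) ^ 2 + 4) * a l (2 * n + 1) : ℤ) : ℚ) ≠ 0 := by
    have := a_two_mul_add_one_pos l n
    positivity
  rw [hβ] at hβ_ne ⊢
  exact nonempty_algEquiv_matrix_of_sq_add_sq _ _ hβ_ne

open Quaternion in
/-- The quaternion algebra `H_ℚ(-1, (l²+4)·a_{2n+1})` splits. -/
theorem quat_alg_splits_la (l : ℕ) (hl : 0 < l) (n : ℕ) (hn : 1 ≤ n) :
    Nonempty (ℍ[ℚ, -1, ((((l : ℤ) ^ 2 + 4) * a l (2 * n + 1) : ℤ) : ℚ)] ≃ₐ[ℚ]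
      Matrix (Fin 2) (Fin 2) ℚ) :=
  quat_alg_splits_la_general l n
end
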